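/- For the autonomous Lagrangian L_a(x,y,ẋ,ẏ) = (1/2)ẋ² + 1 − cos(2πx) + (1/2)(ẏ−c)² on 𝕋² = ℝ²/ℤ², let u ∈ C(𝕋²,ℝ) be independent of the first coordinate (u(π(x̃,ỹ)) depends only on ỹ mod 1). Let t > 0, let q = π(0,ỹ₀) ∈ {0}×𝕊¹, and let γ = (γ₁,γ₂) : [0,t] → ℝ² be a continuous piecewise C¹ curve with π(γ(t)) = q that attains the infimum, i.e. u(π(γ(0))) + ∫_0^t L_a(γ(s),γ̇(s)) ds = T_t u(q). Then γ₁ is constant with value in ℤ; in particular π(γ(s)) ∈ {0}×𝕊¹ for all s ∈ [0,t]. -/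

import Mathlib

open Set Filter MeasureTheory

noncomputable section

/-- The two-torus `𝕋² = ℝ²/ℤ²`. -/
abbrev T2 : Type := AddCircle (1 : ℝ) × AddCircle (1 : ℝ)

/-- The quotient map `π : ℝ² → 𝕋²`. -/
def p2 (q : ℝ × ℝ) : T2 := ((q.1 : AddCircle (1 : ℝ)), (q.2 : AddCircle (1 : ℝ)))

/-- `γ` is continuous and piecewise `C¹` on `[a,b]`. -/
def PiecewiseC1On {E : Type*} [NormedAddCommGroup E] [NormedSpace ℝ E]
    (γ : ℝ → E) (a b : ℝ) : Prop :=
  ContinuousOn γ (Set.Icc a b) ∧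
  ∃ (N : ℕ) (p : Fin (N + 1) → ℝ), p 0 = a ∧ p (Fin.last N) = b ∧ Monotone p ∧
    ∀ i : Fin N, ContDiffOn ℝ 1 γ (Set.Icc (p i.castSucc) (p i.succ))

/-- The Lagrangian `L_a(x,y,ẋ,ẏ) = ẋ²/2 + 1 − cos(2πx) + (ẏ−c)²/2`. -/
def La (c : ℝ) (q v : ℝ × ℝ) : ℝ :=
  (1 / 2) * v.1 ^ 2 + 1 - Real.cos (2 * Real.pi * q.1) + (1 / 2) * (v.2 - c) ^ 2

/-- The action of a curve for `L_a` on `[a,b]`. -/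
def actionA (c : ℝ) (γ : ℝ → ℝ × ℝ) (a b : ℝ) : ℝ :=
  ∫ s in a..b, La c (γ s) (deriv γ s)

/-- The Lax–Oleinik semigroup `T_t u (q)` for `L_a`. -/
def Tlo (c t : ℝ) (u : T2 → ℝ) (q : T2) : ℝ :=
  sInf {A : ℝ | ∃ γ : ℝ → ℝ × ℝ, PiecewiseC1On γ 0 t ∧ p2 (γ t) = q ∧
    A = u (p2 (γ 0)) + actionA c γ 0 t}

/-- `F_t(q,q')`: minimal action among curves from `q` to `q'` in time `t`. -/
def Fa (c t : ℝ) (q q' : T2) : ℝ :=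
  sInf {A : ℝ | ∃ γ : ℝ → ℝ × ℝ, PiecewiseC1On γ 0 t ∧ p2 (γ 0) = q ∧
    p2 (γ t) = q' ∧ A = actionA c γ 0 t}

/-- The Peierls barrier `h(q,q') = liminf_{t→+∞} F_t(q,q')`, written as
`sup over T of inf over t ≥ T`. -/
def hA (c : ℝ) (q q' : T2) : ℝ :=
  sSup {r : ℝ | ∃ T : ℝ, r = sInf {A : ℝ | ∃ t : ℝ, 0 < t ∧ T ≤ t ∧ A = Fa c t q q'}}

/-- The circle `{0} × 𝕊¹ ⊆ 𝕋²`. -/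
def circ0 : Set T2 := {q : T2 | ∃ yt : ℝ, q = p2 (0, yt)}

/-- The function `u_δ(π(x̃,ỹ)) = max(δ − dist(ỹ − 1/2, ℤ), 0)`. -/
def udelta (δ : ℝ) (q : T2) : ℝ :=
  max (δ - ‖q.2 - ((1 / 2 : ℝ) : AddCircle (1 : ℝ))‖) 0

/-!
Replacing a minimizer `γ` by the vertical curve `s ↦ ((γ t).1, (γ s).2)`, whose abscissa is an
integer since `γ t` lies over `{0} × 𝕊¹`, leaves `u (π (γ 0))` unchanged (`u` ignores the first
coordinate) and removes the terms `ẋ²/2` and `1 − cos (2πx)` from the action. Minimality thus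
forces `∫ (1 − cos (2π γ₁)) = 0`, so the continuous `γ₁` is integer-valued, hence constant.
-/

open Real

theorem Fin.exists_mem_Ioc_castSucc_succ {α : Type*} [LinearOrder α] :
    ∀ {N : ℕ} (p : Fin (N + 1) → α) {s : α}, s ∈ Ioc (p 0) (p (Fin.last N)) →
      ∃ i : Fin N, s ∈ Ioc (p i.castSucc) (p i.succ)
  | 0, _, _, hs => absurd (hs.1.trans_le hs.2) (lt_irrefl _)
  | N + 1, p, s, hs => by
    by_cases hsN : s ≤ p (Fin.last N).castSucc
    · obtain ⟨i, hi⟩ := exists_mem_Ioc_castSucc_succ (p ∘ Fin.castSucc) ⟨hs.1, hsN⟩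
      exact ⟨i.castSucc, hi⟩
    · exact ⟨Fin.last N, not_le.1 hsN, hs.2⟩

theorem Fin.ae_exists_mem_Ioo_castSucc_succ {N : ℕ} (p : Fin (N + 1) → ℝ) :
    ∀ᵐ s ∂volume.restrict (Icc (p 0) (p (Fin.last N))),
      ∃ i : Fin N, s ∈ Ioo (p i.castSucc) (p i.succ) := by
  have hnot : ∀ᵐ s ∂(volume : Measure ℝ), s ∉ range p :=
    measure_eq_zero_iff_ae_notMem.1 ((finite_range p).measure_zero volume)
  rw [ae_restrict_iff' measurableSet_Icc]
  filter_upwards [hnot] with s hsp hs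
  obtain ⟨i, hi⟩ := exists_mem_Ioc_castSucc_succ p
    ⟨hs.1.lt_of_ne fun h => hsp ⟨0, h⟩, hs.2⟩
  exact ⟨i, hi.1, hi.2.lt_of_ne fun h => hsp ⟨i.succ, h.symm⟩⟩

section PiecewiseC1

variable {E : Type*} [NormedAddCommGroup E] [NormedSpace ℝ E] {γ : ℝ → E} {a b : ℝ}

theorem ContDiffOn.bddAbove_norm_deriv_Ioo {x y : ℝ} (h : ContDiffOn ℝ 1 γ (Icc x y)) :
    BddAbove ((‖deriv γ ·‖) '' Ioo x y) := by
  rcases lt_or_ge x y with hxy | hyx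
  · refine (isCompact_Icc.bddAbove_image
      (h.continuousOn_derivWithin (uniqueDiffOn_Icc hxy) le_rfl).norm).mono ?_
    rintro _ ⟨s, hs, rfl⟩
    exact ⟨s, Ioo_subset_Icc_self hs, by
      simp only [derivWithin_of_mem_nhds (Icc_mem_nhds hs.1 hs.2)]⟩
  · simp [Ioo_eq_empty hyx.not_gt]

theorem ContDiff.comp_piecewiseC1On {F : Type*} [NormedAddCommGroup F] [NormedSpace ℝ F]
    {f : E → F} (hf : ContDiff ℝ 1 f) (hγ : PiecewiseC1On γ a b) :
    PiecewiseC1On (f ∘ γ) a b :=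
  let ⟨hc, N, p, h0, hl, hp, hC1⟩ := hγ
  ⟨hf.continuous.comp_continuousOn hc, N, p, h0, hl, hp, fun i => hf.comp_contDiffOn (hC1 i)⟩

namespace PiecewiseC1On

theorem exists_ae_differentiableAt_and_norm_deriv_le (hγ : PiecewiseC1On γ a b) :
    ∃ M, ∀ᵐ s ∂volume.restrict (Icc a b), DifferentiableAt ℝ γ s ∧ ‖deriv γ s‖ ≤ M := by
  obtain ⟨-, N, p, rfl, rfl, -, hC1⟩ := hγ
  choose C hC using fun i => (hC1 i).bddAbove_norm_deriv_Ioo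
  obtain ⟨M, hM⟩ := (finite_range C).bddAbove
  refine ⟨M, (Fin.ae_exists_mem_Ioo_castSucc_succ p).mono fun s ⟨i, hi⟩ => ⟨?_, ?_⟩⟩
  · exact ((hC1 i).differentiableOn one_ne_zero).differentiableAt (Icc_mem_nhds hi.1 hi.2)
  · exact (hC i ⟨s, hi, rfl⟩).trans (hM ⟨i, rfl⟩)

theorem intervalIntegrable_comp_deriv [ProperSpace E] {F : Type*} [NormedAddCommGroup F]
    {L : E × E → F} (hL : Continuous L) (hab : a ≤ b) (hγ : PiecewiseC1On γ a b) :
    IntervalIntegrable (fun s => L (γ s, deriv γ s)) volume a b := by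
  obtain ⟨M, hM⟩ := hγ.exists_ae_differentiableAt_and_norm_deriv_le
  obtain ⟨B, hB⟩ := ((isCompact_Icc.image_of_continuousOn hγ.1).prod
    (isCompact_closedBall (0 : E) M)).exists_bound_of_continuousOn hL.continuousOn
  rw [intervalIntegrable_iff_integrableOn_Icc_of_le hab]
  refine IntegrableOn.of_bound measure_Icc_lt_top
    (hL.comp_aestronglyMeasurable ((hγ.1.aestronglyMeasurable measurableSet_Icc).prodMk
      (stronglyMeasurable_deriv γ).aestronglyMeasurable)) B ?_
  filter_upwards [hM, ae_restrict_mem measurableSet_Icc] with s hs hsI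
  exact hB _ ⟨mem_image_of_mem γ hsI, mem_closedBall_zero_iff.2 hs.2⟩

end PiecewiseC1On

end PiecewiseC1

theorem eqOn_zero_of_integral_nonpos {f : ℝ → ℝ} {a b : ℝ} (hab : a < b)
    (hf : ContinuousOn f (Icc a b)) (hf0 : ∀ x ∈ Icc a b, 0 ≤ f x)
    (hint : ∫ x in a..b, f x ≤ 0) : EqOn f 0 (Icc a b) := fun x hx => by
  by_contra hne
  exact hint.not_gt <| intervalIntegral.integral_pos hab hf
    (fun y hy => hf0 y (Ioc_subset_Icc_self hy)) ⟨x, hx, (hf0 x hx).lt_of_ne' hne⟩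

theorem cos_two_pi_mul_eq_one_iff {x : ℝ} :
    cos (2 * π * x) = 1 ↔ x ∈ AddSubgroup.zmultiples (1 : ℝ) := by
  rw [cos_eq_one_iff, AddSubgroup.mem_zmultiples_iff]
  refine exists_congr fun n => ?_
  rw [zsmul_one, mul_comm (2 * π), mul_left_inj' (by positivity)]

theorem p2_mem_circ0_iff {q : ℝ × ℝ} : p2 q ∈ circ0 ↔ q.1 ∈ AddSubgroup.zmultiples (1 : ℝ) := by
  refine ⟨fun ⟨_, h⟩ => (QuotientAddGroup.eq_zero_iff _).1 (congrArg Prod.fst h),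
    fun h => ⟨q.2, Prod.ext ((QuotientAddGroup.eq_zero_iff _).2 h) rfl⟩⟩

theorem La_nonneg (c : ℝ) (q v : ℝ × ℝ) : 0 ≤ La c q v := by
  have := cos_le_one (2 * π * q.1)
  unfold La
  nlinarith [sq_nonneg v.1, sq_nonneg (v.2 - c)]

theorem continuous_La (c : ℝ) : Continuous fun x : (ℝ × ℝ) × (ℝ × ℝ) => La c x.1 x.2 := by
  unfold La
  fun_prop

theorem La_vertical_add_le (c : ℝ) {k : ℝ} (hk : k ∈ AddSubgroup.zmultiples (1 : ℝ))
    (q v : ℝ × ℝ) : La c (k, q.2) (0, v.2) + (1 - cos (2 * π * q.1)) ≤ La c q v := by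
  have hcos := cos_two_pi_mul_eq_one_iff.2 hk
  simp only [La, hcos]
  nlinarith [sq_nonneg v.1]

theorem actionA_nonneg (c : ℝ) (γ : ℝ → ℝ × ℝ) {a b : ℝ} (hab : a ≤ b) : 0 ≤ actionA c γ a b :=
  intervalIntegral.integral_nonneg hab fun _ _ => La_nonneg c _ _

theorem Tlo_le {c t : ℝ} {u : T2 → ℝ} (hu : Continuous u) (ht : 0 ≤ t) {γ : ℝ → ℝ × ℝ}
    (hγ : PiecewiseC1On γ 0 t) : Tlo c t u (p2 (γ t)) ≤ u (p2 (γ 0)) + actionA c γ 0 t := by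
  obtain ⟨qm, -, hqm⟩ := isCompact_univ.exists_isMinOn univ_nonempty hu.continuousOn
  refine csInf_le ⟨u qm, ?_⟩ ⟨γ, hγ, rfl, rfl⟩
  rintro _ ⟨δ, -, -, rfl⟩
  linarith [isMinOn_iff.1 hqm _ (mem_univ (p2 (δ 0))), actionA_nonneg c δ ht]

theorem actionA_vertical_add_integral_le (c : ℝ) {γ : ℝ → ℝ × ℝ} {a b : ℝ} (hab : a ≤ b)
    (hγ : PiecewiseC1On γ a b) {k : ℝ} (hk : k ∈ AddSubgroup.zmultiples (1 : ℝ)) :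
    actionA c (fun s => (k, (γ s).2)) a b + ∫ s in a..b, (1 - cos (2 * π * (γ s).1)) ≤
      actionA c γ a b := by
  have hv : PiecewiseC1On (fun s => (k, (γ s).2)) a b :=
    (contDiff_const.prodMk contDiff_snd).comp_piecewiseC1On hγ
  have hpot : ContinuousOn (fun s => 1 - cos (2 * π * (γ s).1)) (Icc a b) := by
    have := hγ.1
    fun_prop
  have hv_int := hv.intervalIntegrable_comp_deriv (continuous_La c) hab
  have hpot_int := hpot.intervalIntegrable_of_Icc (μ := volume) hab
  obtain ⟨_, hM⟩ := hγ.exists_ae_differentiableAt_and_norm_deriv_le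
  unfold actionA
  rw [← intervalIntegral.integral_add hv_int hpot_int]
  refine intervalIntegral.integral_mono_ae_restrict hab (hv_int.add hpot_int)
    (hγ.intervalIntegrable_comp_deriv (continuous_La c) hab) ?_
  filter_upwards [hM] with s hs
  have hdv : deriv (fun s => (k, (γ s).2)) s = (0, (deriv γ s).2) :=
    ((hasDerivAt_const s k).prodMk hs.1.hasDerivAt.snd).deriv
  rw [hdv]
  exact La_vertical_add_le c hk _ _

/-- For `L_a` on `𝕋²` and continuous `u` independent of the first
coordinate, any curve attaining the infimum in `T_t u (π(0,ỹ₀))` has constant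
first coordinate with value in `ℤ`; in particular it stays in `{0} × 𝕊¹`. -/
theorem minimizer_stays_on_circle (c : ℝ) (u : T2 → ℝ) (hu : Continuous u)
    (hind : ∀ xt xt' yt : ℝ, u (p2 (xt, yt)) = u (p2 (xt', yt)))
    (t : ℝ) (ht : 0 < t) (yt0 : ℝ) (γ : ℝ → ℝ × ℝ)
    (hγ : PiecewiseC1On γ 0 t) (hend : p2 (γ t) = p2 (0, yt0))
    (hmin : u (p2 (γ 0)) + actionA c γ 0 t = Tlo c t u (p2 (0, yt0))) :
    (∃ k : ℤ, ∀ s ∈ Set.Icc (0 : ℝ) t, (γ s).1 = (k : ℝ)) ∧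
    (∀ s ∈ Set.Icc (0 : ℝ) t, p2 (γ s) ∈ circ0) := by
  have hk : (γ t).1 ∈ AddSubgroup.zmultiples (1 : ℝ) := p2_mem_circ0_iff.1 (hend ▸ ⟨yt0, rfl⟩)
  set γv : ℝ → ℝ × ℝ := fun s => ((γ t).1, (γ s).2)
  -- `γv` competes in `Tlo` from a point where `u` takes the same value as at `γ 0`.
  have hv_le : actionA c γ 0 t ≤ actionA c γv 0 t := by
    have hγv : PiecewiseC1On γv 0 t := (contDiff_const.prodMk contDiff_snd).comp_piecewiseC1On hγ
    have := Tlo_le (c := c) hu ht.le hγv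
    have hu0 : u (p2 (γv 0)) = u (p2 (γ 0)) := hind _ _ _
    rw [show p2 (γv t) = p2 (γ t) from rfl, hend, ← hmin, hu0] at this
    linarith
  have hpot : EqOn (fun s => 1 - cos (2 * π * (γ s).1)) 0 (Icc 0 t) := by
    refine eqOn_zero_of_integral_nonpos ht (by have := hγ.1; fun_prop)
      (fun s _ => sub_nonneg.2 (cos_le_one _)) ?_
    linarith [actionA_vertical_add_integral_le c ht.le hγ hk]
  have hconst : ∀ s ∈ Icc 0 t, (γ s).1 = (γ t).1 := fun s hs =>
    isPreconnected_Icc.constant_of_mapsTo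
      (SetLike.isDiscrete_iff_discreteTopology.2 inferInstance)
      (continuous_fst.comp_continuousOn hγ.1)
      (fun s hs => cos_two_pi_mul_eq_one_iff.1 (sub_eq_zero.1 (hpot hs)).symm) hs
      ⟨ht.le, le_rfl⟩
  obtain ⟨k, hkt⟩ := AddSubgroup.mem_zmultiples_iff.1 hk
  refine ⟨⟨k, fun s hs => by rw [hconst s hs, ← hkt, zsmul_one]⟩, fun s hs => ?_⟩
  exact p2_mem_circ0_iff.2 (hconst s hs ▸ hk)
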